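/- Let Φ = (G, φ) be a connected T-gain graph on an r-regular graph G with r ≥ 1. Then E_Φ(v) ≥ 1 for every vertex v, with equality if and only if Φ is switching equivalent to (K_{r,r}, 1). -/

import Mathlib

open Matrix BigOperators
open scoped Classical ComplexOrder

/-- A complex unit gain graph (`𝕋`-gain graph) on a finite vertex type `V`. -/
structure TGainGraph (V : Type*) [Fintype V] [DecidableEq V] where
  G : SimpleGraph V
  A : Matrix V V ℂ
  herm : A.IsHermitian
  unitGain : ∀ i j, G.Adj i j → ‖A i j‖ = 1
  zeroGain : ∀ i j, ¬ G.Adj i j → A i j = 0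

namespace TGainGraph

variable {V : Type*} [Fintype V] [DecidableEq V]

/-- The energy of a `𝕋`-gain graph: sum of absolute values of eigenvalues of `A(Φ)`. -/
noncomputable def energy (Φ : TGainGraph V) : ℝ :=
  ∑ i, |Φ.herm.eigenvalues i|

/-- `|A(Φ)| = (A(Φ) A(Φ)ᴴ)^{1/2}`. -/
noncomputable def absMatrix (Φ : TGainGraph V) : Matrix V V ℂ :=
  ((Matrix.posSemidef_self_mul_conjTranspose Φ.A).1.eigenvectorUnitary : Matrix V V ℂ) *
    diagonal (((↑) : ℝ → ℂ) ∘ (√·) ∘ (Matrix.posSemidef_self_mul_conjTranspose Φ.A).1.eigenvalues) *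
    (star (Matrix.posSemidef_self_mul_conjTranspose Φ.A).1.eigenvectorUnitary : Matrix V V ℂ)

/-- Energy of a vertex: the `(i,i)` entry of `|A(Φ)|`. -/
noncomputable def vertexEnergy (Φ : TGainGraph V) (i : V) : ℝ :=
  (Φ.absMatrix i i).re

/-- Degree of a vertex in the underlying graph. -/
noncomputable def deg (Φ : TGainGraph V) (i : V) : ℕ := Φ.G.degree i

/-- Maximum vertex degree of the underlying graph. -/
noncomputable def maxDeg (Φ : TGainGraph V) : ℕ := Φ.G.maxDegree

/-- Spectral radius of `A(Φ)`. -/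
noncomputable def specRadius (Φ : TGainGraph V) : ℝ :=
  ⨆ i, |Φ.herm.eigenvalues i|

/-- Switching equivalence of two gain graphs on the same vertex set: same
underlying graph, and adjacency matrices conjugate by a diagonal unitary. -/
def SwitchEquiv (Φ₁ Φ₂ : TGainGraph V) : Prop :=
  Φ₁.G = Φ₂.G ∧ ∃ U : Matrix V V ℂ, U.IsDiag ∧ U ∈ Matrix.unitaryGroup V ℂ ∧
    Φ₁.A = U * Φ₂.A * Uᴴ

/-- `Φ` switches to the all-ones gain on its underlying graph,
i.e. `Φ ∼ (G, 1)` (equivalently, `Φ` is balanced). -/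
def SwitchesToOne (Φ : TGainGraph V) : Prop :=
  ∃ U : Matrix V V ℂ, U.IsDiag ∧ U ∈ Matrix.unitaryGroup V ℂ ∧
    Φ.A = U * (Φ.G.adjMatrix ℂ) * Uᴴ

/-- `Φ ∼ (K_{a,b}, 1)`: the underlying graph is (isomorphic to) the complete
bipartite graph `K_{a,b}` via some bijection `e`, and the gains switch to `1`. -/
def SwitchEquivToCompleteBipartite (Φ : TGainGraph V) (a b : ℕ) : Prop :=
  (∃ e : V ≃ (Fin a ⊕ Fin b), ∀ i j, Φ.G.Adj i j ↔
      (completeBipartiteGraph (Fin a) (Fin b)).Adj (e i) (e j)) ∧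
  SwitchesToOne Φ

/-- The gain of a walk: the product of the gains of its edges in order. -/
noncomputable def walkGain (Φ : TGainGraph V) {u v : V} (w : Φ.G.Walk u v) : ℂ :=
  (w.darts.map (fun d => Φ.A d.fst d.snd)).prod

/-- A gain graph is balanced if every cycle has gain `1`. -/
def Balanced (Φ : TGainGraph V) : Prop :=
  ∀ (u : V) (w : Φ.G.Walk u u), w.IsCycle → Φ.walkGain w = 1

/-- The restriction of a gain graph to a set of vertices. -/
noncomputable def restrict (Φ : TGainGraph V) (s : Set V) : TGainGraph s where
  G := Φ.G.induce s
  A := Φ.A.submatrix (Subtype.val) (Subtype.val)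
  herm := Φ.herm.submatrix _
  unitGain := fun i j h => Φ.unitGain i j h
  zeroGain := fun i j h => Φ.zeroGain i j h

/-- The vertex set of the connected component `c`. -/
def componentSet (Φ : TGainGraph V) (c : Φ.G.ConnectedComponent) : Set V :=
  {v | Φ.G.connectedComponentMk v = c}

/-- Every connected component of `Φ` is either an isolated vertex or a balanced
complete bipartite gain graph `(K_{k,k},1)` with a perfect matching. -/
def ComponentsBalancedCompleteBipartitePM (Φ : TGainGraph V) : Prop :=
  ∀ c : Φ.G.ConnectedComponent,
    (∀ v ∈ Φ.componentSet c, ∀ w, ¬ Φ.G.Adj v w) ∨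
    ∃ k : ℕ, 0 < k ∧
      (Φ.restrict (Φ.componentSet c)).SwitchEquivToCompleteBipartite k k

/-- The matching number of a graph. -/
noncomputable def matchingNumber (G : SimpleGraph V) : ℕ :=
  sSup {k | ∃ M : G.Subgraph, M.IsMatching ∧ M.edgeSet.ncard = k}

/-- The vertex cover number of a graph. -/
noncomputable def coverNumber (G : SimpleGraph V) : ℕ :=
  sInf {k | ∃ s : Finset V, s.card = k ∧ ∀ i j, G.Adj i j → i ∈ s ∨ j ∈ s}

/-- The number of odd cycles of a graph (counted by their edge sets). -/
noncomputable def oddCycleCount (G : SimpleGraph V) : ℕ :=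
  Set.ncard {s : Set (Sym2 V) | ∃ (u : V) (w : G.Walk u u),
    w.IsCycle ∧ Odd w.length ∧ s = {e | e ∈ w.edges}}

end TGainGraph

/-!
Write `A = A(Φ) = ∑ⱼ λⱼ uⱼ uⱼᴴ` and `wⱼ = |uⱼ(v)|²`. The `v`-th diagonal entries of `|A|`, `A²`
and `A⁴` are `∑ |λⱼ| wⱼ`, `∑ λⱼ² wⱼ` and `∑ λⱼ⁴ wⱼ`. Regularity gives `(A²)ᵥᵥ = r` and
`|λⱼ| ≤ r`, so `λ² ≤ r |λ|` yields `r ≤ r E_Φ(v)`; equality holds iff the weights are carried by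
`|λ| ∈ {0, r}`, i.e. iff `(A⁴)ᵥᵥ = r³`.

On the other hand `(A⁴)ᵥᵥ = ∑_w |(A²)ᵥw|²`, where `|(A²)ᵥw|` is at most the number `c(w)` of
common neighbours of `v` and `w`, `c(w) ≤ r` and `∑_w c(w) = r²`. So `(A⁴)ᵥᵥ = r³` iff every
`c(w)` is `0` or `r` and, whenever `c(w) = r`, all paths `v - u - w` carry the same gain. The
first condition makes the connected graph `K_{r,r}`, with sides `{w | N(w) = N(v)}` and `N(v)`;
the second one produces the switching function.
-/

open Finset SimpleGraph ComplexConjugate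

theorem Matrix.IsHermitian.cfc_apply_self {n : Type*} [Fintype n] [DecidableEq n]
    {A : Matrix n n ℂ} (hA : A.IsHermitian) (f : ℝ → ℝ) (i : n) :
    cfc f A i i = ∑ j, (f (hA.eigenvalues j) * Complex.normSq (hA.eigenvectorBasis j i) : ℝ) := by
  rw [hA.cfc_eq, Matrix.IsHermitian.cfc, Unitary.conjStarAlgAut_apply]
  simp only [Matrix.mul_apply, Matrix.diagonal_apply, Matrix.star_apply, Function.comp_apply,
    Matrix.IsHermitian.eigenvectorUnitary_apply, mul_ite, mul_zero, Finset.sum_ite_eq',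
    Finset.mem_univ, if_true, Complex.ofReal_sum, Complex.ofReal_mul, RCLike.star_def]
  refine sum_congr rfl fun j _ => ?_
  rw [mul_right_comm, Complex.mul_conj, mul_comm]
  rfl

theorem Matrix.IsHermitian.pow_apply_self {n : Type*} [Fintype n] [DecidableEq n]
    {A : Matrix n n ℂ} (hA : A.IsHermitian) (k : ℕ) (i : n) :
    (A ^ k) i i = ∑ j, (hA.eigenvalues j ^ k * Complex.normSq (hA.eigenvectorBasis j i) : ℝ) := by
  rw [← cfc_pow_id (R := ℝ) A k hA.isSelfAdjoint, hA.cfc_apply_self]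

attribute [local instance] Matrix.linftyOpNormedRing Matrix.linftyOpNormedAlgebra
  Matrix.linfty_opNormOneClass in
theorem Matrix.IsHermitian.abs_eigenvalues_le {n : Type*} [Fintype n] [DecidableEq n]
    {A : Matrix n n ℂ} (hA : A.IsHermitian) {c : ℝ} (hc : ∀ i, ∑ j, ‖A i j‖ ≤ c) (j : n) :
    |hA.eigenvalues j| ≤ c := by
  have : Nonempty n := ⟨j⟩
  refine (spectrum.norm_le_norm_of_mem (hA.eigenvalues_mem_spectrum_real j)).trans ?_
  obtain ⟨i, -, hi⟩ := Finset.exists_mem_eq_sup Finset.univ Finset.univ_nonempty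
    fun i => ∑ j, ‖A i j‖₊
  rw [Matrix.linfty_opNorm_def, hi, NNReal.coe_sum]
  exact hc i

theorem eq_inv_card_smul_sum_of_norm_sum_eq_card {ι E : Type*} [NormedAddCommGroup E]
    [InnerProductSpace ℝ E] {s : Finset ι} {z : ι → E} (hz : ∀ i ∈ s, ‖z i‖ = 1)
    (hs : ‖∑ i ∈ s, z i‖ = #s) : ∀ i ∈ s, z i = (#s : ℝ)⁻¹ • ∑ i ∈ s, z i := by
  intro i hi
  have hn : (#s : ℝ) ≠ 0 := by exact_mod_cast (card_pos.2 ⟨i, hi⟩).ne'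
  set c := (#s : ℝ)⁻¹ • ∑ i ∈ s, z i
  have hc : ‖c‖ = 1 := by
    rw [norm_smul, hs, norm_inv, Real.norm_natCast, inv_mul_cancel₀ hn]
  have hle : ∀ j ∈ s, inner ℝ c (z j) ≤ 1 := fun j hj =>
    (real_inner_le_norm _ _).trans_eq (by rw [hc, hz j hj, one_mul])
  have hsum : ∑ j ∈ s, inner ℝ c (z j) = ∑ j ∈ s, (1 : ℝ) := by
    rw [← inner_sum, real_inner_smul_left, real_inner_self_eq_norm_sq, hs, sum_const,
      nsmul_one]
    field_simp
  have hci : inner ℝ c (z i) = ‖c‖ * ‖z i‖ := by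
    rw [(sum_eq_sum_iff_of_le hle).1 hsum i hi, hc, hz i hi, one_mul]
  have := inner_eq_norm_mul_iff_real.1 hci
  rwa [hc, hz i hi, one_smul, one_smul, eq_comm] at this

theorem sq_mul_le_mul_abs_mul {a w r : ℝ} (hw : 0 ≤ w) (ha : |a| ≤ r) :
    a ^ 2 * w ≤ r * (|a| * w) := by
  rw [← sq_abs, sq, mul_assoc]
  exact mul_le_mul_of_nonneg_right ha (mul_nonneg (abs_nonneg _) hw)

section WeightedMeans

variable {ι : Type*} {s : Finset ι} {a w : ι → ℝ} {r : ℝ}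

theorem one_le_sum_abs_mul_of_sum_sq_mul_eq (hr : 0 < r) (hw : ∀ i ∈ s, 0 ≤ w i)
    (ha : ∀ i ∈ s, |a i| ≤ r) (h2 : ∑ i ∈ s, a i ^ 2 * w i = r) :
    1 ≤ ∑ i ∈ s, |a i| * w i := by
  refine le_of_mul_le_mul_left ?_ hr
  calc r * 1 = ∑ i ∈ s, a i ^ 2 * w i := by rw [mul_one, h2]
    _ ≤ ∑ i ∈ s, r * (|a i| * w i) :=
      sum_le_sum fun i hi => sq_mul_le_mul_abs_mul (hw i hi) (ha i hi)
    _ = r * ∑ i ∈ s, |a i| * w i := (mul_sum ..).symm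

theorem sum_abs_mul_eq_one_iff_sum_pow_four_mul_eq (hr : 0 < r) (hw : ∀ i ∈ s, 0 ≤ w i)
    (ha : ∀ i ∈ s, |a i| ≤ r) (h2 : ∑ i ∈ s, a i ^ 2 * w i = r) :
    ∑ i ∈ s, |a i| * w i = 1 ↔ ∑ i ∈ s, a i ^ 4 * w i = r ^ 3 := by
  have hle4 : ∀ i ∈ s, a i ^ 4 * w i ≤ r ^ 2 * (a i ^ 2 * w i) := fun i hi => by
    have : a i ^ 2 ≤ r ^ 2 := sq_le_sq' (abs_le.1 (ha i hi)).1 (abs_le.1 (ha i hi)).2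
    rw [show a i ^ 4 * w i = a i ^ 2 * (a i ^ 2 * w i) by ring]
    exact mul_le_mul_of_nonneg_right this (mul_nonneg (sq_nonneg _) (hw i hi))
  -- both equalities hold termwise exactly when `w i = 0` or `|a i| ∈ {0, r}`
  have key : ∀ i ∈ s,
      a i ^ 2 * w i = r * (|a i| * w i) ↔ a i ^ 4 * w i = r ^ 2 * (a i ^ 2 * w i) := by
    intro i _
    rw [← sq_abs (a i), ← Even.pow_abs ⟨2, rfl⟩ (a i)]
    constructor
    · intro h
      linear_combination (|a i| ^ 2 + r * |a i|) * h
    · intro h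
      have h' : (|a i| * (|a i| + r)) * (|a i| ^ 2 * w i - r * (|a i| * w i)) = 0 := by
        linear_combination h
      rcases mul_eq_zero.1 h' with h0 | h0
      · have : |a i| = 0 := by
          rcases mul_eq_zero.1 h0 with h0 | h0
          · exact h0
          · linarith [abs_nonneg (a i)]
        simp [this]
      · exact sub_eq_zero.1 h0
  calc ∑ i ∈ s, |a i| * w i = 1
      ↔ ∑ i ∈ s, a i ^ 2 * w i = ∑ i ∈ s, r * (|a i| * w i) := by
        rw [h2, ← mul_sum, left_eq_mul₀ hr.ne']
    _ ↔ ∀ i ∈ s, a i ^ 2 * w i = r * (|a i| * w i) :=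
        sum_eq_sum_iff_of_le fun i hi => sq_mul_le_mul_abs_mul (hw i hi) (ha i hi)
    _ ↔ ∀ i ∈ s, a i ^ 4 * w i = r ^ 2 * (a i ^ 2 * w i) := forall₂_congr key
    _ ↔ ∑ i ∈ s, a i ^ 4 * w i = ∑ i ∈ s, r ^ 2 * (a i ^ 2 * w i) :=
        (sum_eq_sum_iff_of_le hle4).symm
    _ ↔ ∑ i ∈ s, a i ^ 4 * w i = r ^ 3 := by rw [← mul_sum, h2, ← pow_succ]

end WeightedMeans

theorem sq_eq_mul_iff_of_le_of_le {p m r : ℝ} (hp : 0 ≤ p) (hpm : p ≤ m) (hmr : m ≤ r) :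
    p ^ 2 = r * m ↔ p = m ∧ (m = 0 ∨ m = r) := by
  constructor
  · intro h
    have hm : m * (m - r) = 0 := by nlinarith [mul_le_mul hpm hpm hp (hp.trans hpm)]
    have hpm' : p = m := by nlinarith [mul_le_mul hpm hpm hp (hp.trans hpm)]
    exact ⟨hpm', (mul_eq_zero.1 hm).imp_right sub_eq_zero.1⟩
  · rintro ⟨rfl, rfl | rfl⟩ <;> ring

namespace SimpleGraph

theorem Connected.induction_on_adj {V : Type*} {G : SimpleGraph V} (hconn : G.Connected)
    {P : V → Prop} {v : V} (hv : P v) (hstep : ∀ a b, G.Adj a b → P a → P b) (a : V) : P a := by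
  by_contra ha
  obtain ⟨p⟩ := hconn.preconnected v a
  obtain ⟨d, -, hd, hd'⟩ := p.exists_boundary_dart {b | P b} hv ha
  exact hd' (hstep _ _ d.adj hd)

section
variable {V : Type*} [Fintype V] [DecidableEq V] {G : SimpleGraph V}

theorem sum_card_neighborFinset_inter {r : ℕ} (hreg : G.IsRegularOfDegree r) (v : V) :
    ∑ w, #(G.neighborFinset v ∩ G.neighborFinset w) = r ^ 2 := by
  calc ∑ w, #(G.neighborFinset v ∩ G.neighborFinset w)
      = ∑ w, ∑ u ∈ G.neighborFinset v, if G.Adj w u then 1 else 0 := by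
        refine sum_congr rfl fun w _ => ?_
        rw [← filter_mem_eq_inter, card_filter]
        simp only [mem_neighborFinset]
    _ = ∑ u ∈ G.neighborFinset v, G.degree u := by
        rw [sum_comm]
        refine sum_congr rfl fun u _ => ?_
        rw [sum_boole, ← card_neighborFinset_eq_degree, neighborFinset_eq_filter, Nat.cast_id]
        simp only [adj_comm]
    _ = r ^ 2 := by
        rw [sum_congr rfl fun u _ => hreg u, sum_const, card_neighborFinset_eq_degree, hreg v,
          smul_eq_mul, sq]

theorem neighborFinset_eq_of_card_inter_eq {r : ℕ} (hreg : G.IsRegularOfDegree r) {v w : V}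
    (h : #(G.neighborFinset v ∩ G.neighborFinset w) = r) :
    G.neighborFinset w = G.neighborFinset v := by
  have hv : G.neighborFinset v ∩ G.neighborFinset w = G.neighborFinset v :=
    eq_of_subset_of_card_le inter_subset_left (by rw [h, card_neighborFinset_eq_degree, hreg v])
  have hw : G.neighborFinset v ∩ G.neighborFinset w = G.neighborFinset w :=
    eq_of_subset_of_card_le inter_subset_right (by rw [h, card_neighborFinset_eq_degree, hreg w])
  exact hw.symm.trans hv

theorem Connected.adj_iff_of_neighborFinset_eq (hconn : G.Connected) {v : V}
    (h : ∀ w, (G.neighborFinset v ∩ G.neighborFinset w).Nonempty →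
      G.neighborFinset w = G.neighborFinset v) (a b : V) :
    G.Adj a b ↔ (G.neighborFinset a = G.neighborFinset v ↔
      G.neighborFinset b ≠ G.neighborFinset v) := by
  have hN : ∀ a b, G.Adj a b → b ∈ G.neighborFinset v →
      G.neighborFinset a = G.neighborFinset v := fun a b hab hb =>
    h a ⟨b, mem_inter.2 ⟨hb, (mem_neighborFinset _ _ _).2 hab⟩⟩
  have hside : ∀ a, a ∈ G.neighborFinset v ↔ G.neighborFinset a ≠ G.neighborFinset v := by
    refine fun a => ⟨fun ha hav => G.irrefl ((mem_neighborFinset _ _ _).1 (hav ▸ ha)), fun ha => ?_⟩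
    refine (hconn.induction_on_adj (P := fun a =>
      G.neighborFinset a = G.neighborFinset v ∨ a ∈ G.neighborFinset v)
      (Or.inl rfl) ?_ a).resolve_left ha
    rintro a b hab (ha | ha)
    · exact Or.inr (ha ▸ (mem_neighborFinset _ _ _).2 hab)
    · exact Or.inl (hN b a hab.symm ha)
  constructor
  · intro hab
    exact ⟨fun ha => (hside b).1 (ha ▸ (mem_neighborFinset _ _ _).2 hab),
      fun hb => hN a b hab ((hside b).2 hb)⟩
  · intro hab
    by_cases ha : G.neighborFinset a = G.neighborFinset v
    · rw [← mem_neighborFinset, ha]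
      exact (hside b).2 (hab.1 ha)
    · have hb : G.neighborFinset b = G.neighborFinset v := not_not.1 (hab.not.1 ha)
      rw [adj_comm, ← mem_neighborFinset, hb]
      exact (hside a).2 ha

end

section
variable {V : Type*} [Fintype V] {G : SimpleGraph V}

theorem exists_equiv_completeBipartite_of_adj_iff {r : ℕ} (hreg : G.IsRegularOfDegree r)
    {p : V → Prop} {v b : V} (hv : p v) (hb : ¬ p b) (hadj : ∀ a c, G.Adj a c ↔ (p a ↔ ¬ p c)) :
    ∃ e : V ≃ Fin r ⊕ Fin r,
      ∀ a c, G.Adj a c ↔ (completeBipartiteGraph (Fin r) (Fin r)).Adj (e a) (e c) := by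
  have hN : ∀ u, G.neighborFinset u = ({a | p u ↔ ¬ p a} : Finset V) := fun u => by
    ext a
    rw [mem_neighborFinset, hadj, mem_filter, and_iff_right (mem_univ a)]
  have hp : Fintype.card {a // p a} = r := by
    rw [Fintype.card_subtype, ← hreg b, ← card_neighborFinset_eq_degree, hN b]
    simp [hb]
  have hnp : Fintype.card {a // ¬ p a} = r := by
    rw [Fintype.card_subtype, ← hreg v, ← card_neighborFinset_eq_degree, hN v]
    simp [hv]
  refine ⟨(Equiv.sumCompl p).symm.trans
    (Equiv.sumCongr (Fintype.equivFinOfCardEq hp) (Fintype.equivFinOfCardEq hnp)), fun a c => ?_⟩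
  rw [hadj]
  by_cases ha : p a <;> by_cases hc : p c <;>
    simp [ha, hc, Equiv.sumCompl_symm_apply_of_pos, Equiv.sumCompl_symm_apply_of_neg]

theorem neighborFinset_eq_or_disjoint_of_equiv_completeBipartite {m n : ℕ} {e : V ≃ Fin m ⊕ Fin n}
    (he : ∀ a b, G.Adj a b ↔ (completeBipartiteGraph (Fin m) (Fin n)).Adj (e a) (e b))
    (v w : V) :
    G.neighborFinset w = G.neighborFinset v ∨
      Disjoint (G.neighborFinset v) (G.neighborFinset w) := by
  have hadj : ∀ a b, G.Adj a b ↔ (e a).isLeft ≠ (e b).isLeft := fun a b => by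
    rw [he]
    rcases e a with x | x <;> rcases e b with y | y <;> simp
  by_cases hvw : (e w).isLeft = (e v).isLeft
  · left
    ext u
    simp only [mem_neighborFinset, hadj, hvw]
  · right
    rw [Finset.disjoint_left]
    intro u hv hw
    simp only [mem_neighborFinset, hadj] at hv hw
    revert hv hw hvw
    cases (e u).isLeft <;> cases (e v).isLeft <;> cases (e w).isLeft <;> simp

end

end SimpleGraph

namespace TGainGraph

variable {V : Type*} [Fintype V] [DecidableEq V] (Φ : TGainGraph V)

open scoped MatrixOrder in
theorem absMatrix_eq_cfc_abs : Φ.absMatrix = cfc (fun x : ℝ => |x|) Φ.A := by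
  have hM := Matrix.posSemidef_self_mul_conjTranspose Φ.A
  have hsqrt : Φ.absMatrix = CFC.sqrt (Φ.A * Φ.Aᴴ) := by
    rw [CFC.sqrt_eq_real_sqrt _ hM.nonneg, cfcₙ_eq_cfc, hM.1.cfc_eq]
    rfl
  have hsq : Φ.A * Φ.Aᴴ = star Φ.A * Φ.A := by rw [Matrix.star_eq_conjTranspose, Φ.herm.eq]
  rw [hsqrt, hsq, ← CFC.abs, CFC.abs_eq_cfc_norm Φ.A Φ.herm]
  rfl

theorem vertexEnergy_eq_sum (v : V) :
    Φ.vertexEnergy v =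
      ∑ j, |Φ.herm.eigenvalues j| * Complex.normSq (Φ.herm.eigenvectorBasis j v) := by
  rw [vertexEnergy, absMatrix_eq_cfc_abs, Φ.herm.cfc_apply_self, Complex.ofReal_re]

theorem norm_A_apply (a b : V) : ‖Φ.A a b‖ = if Φ.G.Adj a b then 1 else 0 := by
  split_ifs with h
  · exact Φ.unitGain a b h
  · rw [Φ.zeroGain a b h, norm_zero]

theorem A_apply_swap (a b : V) : Φ.A b a = conj (Φ.A a b) := (Φ.herm.apply b a).symm

theorem A_mul_A_swap {a b : V} (h : Φ.G.Adj a b) : Φ.A a b * Φ.A b a = 1 := by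
  rw [Φ.A_apply_swap a b, Complex.mul_conj, Complex.normSq_eq_norm_sq, Φ.unitGain a b h]
  norm_num

theorem sum_norm_A_apply (a : V) : ∑ b, ‖Φ.A a b‖ = Φ.G.degree a := by
  simp only [norm_A_apply, sum_boole, ← card_neighborFinset_eq_degree, neighborFinset_eq_filter]

theorem abs_eigenvalues_le {r : ℕ} (hreg : Φ.G.IsRegularOfDegree r) (j : V) :
    |Φ.herm.eigenvalues j| ≤ r :=
  Φ.herm.abs_eigenvalues_le (fun a => by rw [sum_norm_A_apply, hreg a]) j

theorem A_sq_apply (v w : V) :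
    (Φ.A ^ 2) v w = ∑ u ∈ Φ.G.neighborFinset v ∩ Φ.G.neighborFinset w, Φ.A v u * Φ.A u w := by
  rw [sq, Matrix.mul_apply]
  refine (sum_subset (subset_univ _) fun u _ hu => ?_).symm
  rw [mem_inter, mem_neighborFinset, mem_neighborFinset, not_and_or] at hu
  rcases hu with hu | hu
  · rw [Φ.zeroGain v u hu, zero_mul]
  · rw [Φ.zeroGain u w (fun h => hu h.symm), mul_zero]

theorem norm_A_sq_apply_le (v w : V) :
    ‖(Φ.A ^ 2) v w‖ ≤ #(Φ.G.neighborFinset v ∩ Φ.G.neighborFinset w) := by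
  rw [A_sq_apply, card_eq_sum_ones, Nat.cast_sum, Nat.cast_one]
  refine (norm_sum_le _ _).trans (sum_le_sum fun u hu => ?_)
  rw [mem_inter, mem_neighborFinset, mem_neighborFinset] at hu
  rw [norm_mul, Φ.unitGain v u hu.1, Φ.unitGain u w hu.2.symm, one_mul]

theorem A_sq_apply_self (v : V) : (Φ.A ^ 2) v v = Φ.G.degree v := by
  rw [A_sq_apply, inter_self, sum_congr rfl fun u hu =>
    Φ.A_mul_A_swap ((mem_neighborFinset _ _ _).1 hu), sum_const, card_neighborFinset_eq_degree,
    nsmul_one]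

theorem A_pow_four_apply_self (v : V) :
    (Φ.A ^ 4) v v = ∑ w, (‖(Φ.A ^ 2) v w‖ ^ 2 : ℝ) := by
  rw [show 4 = 2 + 2 from rfl, pow_add, Matrix.mul_apply, Complex.ofReal_sum]
  refine sum_congr rfl fun w _ => ?_
  rw [← (Φ.herm.pow 2).apply w v, RCLike.star_def, Complex.mul_conj, Complex.normSq_eq_norm_sq,
    Complex.ofReal_pow]

theorem sum_eigenvalues_sq_mul {r : ℕ} (hreg : Φ.G.IsRegularOfDegree r) (v : V) :
    ∑ j, Φ.herm.eigenvalues j ^ 2 * Complex.normSq (Φ.herm.eigenvectorBasis j v) = r := by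
  have h := Φ.herm.pow_apply_self 2 v
  rw [A_sq_apply_self, hreg v] at h
  exact_mod_cast h.symm

theorem one_le_vertexEnergy {r : ℕ} (hreg : Φ.G.IsRegularOfDegree r) (hr : 0 < r) (v : V) :
    1 ≤ Φ.vertexEnergy v := by
  rw [vertexEnergy_eq_sum]
  exact one_le_sum_abs_mul_of_sum_sq_mul_eq (by exact_mod_cast hr)
    (fun j _ => Complex.normSq_nonneg _) (fun j _ => Φ.abs_eigenvalues_le hreg j)
    (Φ.sum_eigenvalues_sq_mul hreg v)

theorem vertexEnergy_eq_one_iff {r : ℕ} (hreg : Φ.G.IsRegularOfDegree r) (hr : 0 < r) (v : V) :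
    Φ.vertexEnergy v = 1 ↔ ∑ w, ‖(Φ.A ^ 2) v w‖ ^ 2 = (r : ℝ) ^ 3 := by
  have h4 := Φ.herm.pow_apply_self 4 v
  rw [A_pow_four_apply_self, Complex.ofReal_inj] at h4
  rw [vertexEnergy_eq_sum, sum_abs_mul_eq_one_iff_sum_pow_four_mul_eq (by exact_mod_cast hr)
    (fun j _ => Complex.normSq_nonneg _) (fun j _ => Φ.abs_eigenvalues_le hreg j)
    (Φ.sum_eigenvalues_sq_mul hreg v), h4]

theorem sum_norm_A_sq_apply_sq_eq_iff {r : ℕ} (hreg : Φ.G.IsRegularOfDegree r) (v : V) :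
    ∑ w, ‖(Φ.A ^ 2) v w‖ ^ 2 = (r : ℝ) ^ 3 ↔
      ∀ w, ‖(Φ.A ^ 2) v w‖ = #(Φ.G.neighborFinset v ∩ Φ.G.neighborFinset w) ∧
        (#(Φ.G.neighborFinset v ∩ Φ.G.neighborFinset w) = 0 ∨
          #(Φ.G.neighborFinset v ∩ Φ.G.neighborFinset w) = r) := by
  have hm : ∀ w, (#(Φ.G.neighborFinset v ∩ Φ.G.neighborFinset w) : ℝ) ≤ r := fun w => by
    rw [← hreg v, ← card_neighborFinset_eq_degree]
    exact_mod_cast card_le_card inter_subset_left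
  have hle : ∀ w ∈ univ, ‖(Φ.A ^ 2) v w‖ ^ 2 ≤
      r * (#(Φ.G.neighborFinset v ∩ Φ.G.neighborFinset w) : ℝ) := fun w _ => by
    nlinarith [norm_nonneg ((Φ.A ^ 2) v w), Φ.norm_A_sq_apply_le v w, hm w]
  have hsum : ∑ w, r * (#(Φ.G.neighborFinset v ∩ Φ.G.neighborFinset w) : ℝ) = (r : ℝ) ^ 3 := by
    rw [← mul_sum]
    exact_mod_cast (by rw [sum_card_neighborFinset_inter hreg v]; ring :
      r * ∑ w, #(Φ.G.neighborFinset v ∩ Φ.G.neighborFinset w) = r ^ 3)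
  rw [← hsum, sum_eq_sum_iff_of_le hle]
  simp only [mem_univ, forall_const]
  refine forall_congr' fun w => ?_
  rw [sq_eq_mul_iff_of_le_of_le (norm_nonneg _) (Φ.norm_A_sq_apply_le v w) (hm w)]
  norm_cast

theorem switchesToOne_iff : Φ.SwitchesToOne ↔
    ∃ d : V → ℂ, (∀ a, ‖d a‖ = 1) ∧ ∀ a b, Φ.G.Adj a b → Φ.A a b = d a * conj (d b) := by
  have hentry : ∀ (d : V → ℂ) (M : Matrix V V ℂ) a b,
      (diagonal d * M * (diagonal d)ᴴ) a b = d a * M a b * conj (d b) := fun d M a b => by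
    rw [diagonal_conjTranspose, mul_diagonal, diagonal_mul]
    rfl
  have hunit : ∀ d : V → ℂ, diagonal d ∈ unitaryGroup V ℂ ↔ ∀ a, ‖d a‖ = 1 := fun d => by
    rw [mem_unitaryGroup_iff, star_eq_conjTranspose, diagonal_conjTranspose, diagonal_mul_diagonal,
      ← diagonal_one, diagonal_eq_diagonal_iff]
    refine forall_congr' fun a => ?_
    rw [Pi.star_apply, RCLike.star_def, Complex.mul_conj', ← Complex.ofReal_pow,
      Complex.ofReal_eq_one, pow_eq_one_iff_of_nonneg (norm_nonneg _) two_ne_zero]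
  constructor
  · rintro ⟨U, hdiag, hU, hA⟩
    rw [← hdiag.diagonal_diag] at hU hA
    refine ⟨U.diag, (hunit _).1 hU, fun a b h => ?_⟩
    rw [hA, hentry, adjMatrix_apply, if_pos h, mul_one]
  · rintro ⟨d, hd, hA⟩
    refine ⟨diagonal d, isDiag_diagonal d, (hunit d).2 hd, ?_⟩
    ext a b
    rw [hentry, adjMatrix_apply]
    split_ifs with h
    · rw [hA a b h, mul_one]
    · rw [Φ.zeroGain a b h, mul_zero, zero_mul]

theorem norm_A_sq_apply_of_switchesToOne (h : Φ.SwitchesToOne) (v w : V) :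
    ‖(Φ.A ^ 2) v w‖ = #(Φ.G.neighborFinset v ∩ Φ.G.neighborFinset w) := by
  obtain ⟨d, hd, hA⟩ := Φ.switchesToOne_iff.1 h
  have hterm : ∀ u ∈ Φ.G.neighborFinset v ∩ Φ.G.neighborFinset w,
      Φ.A v u * Φ.A u w = d v * conj (d w) := fun u hu => by
    rw [mem_inter, mem_neighborFinset, mem_neighborFinset] at hu
    have hu' : conj (d u) * d u = 1 := by rw [Complex.conj_mul', hd]; norm_num
    rw [hA v u hu.1, hA u w hu.2.symm]
    linear_combination (d v * conj (d w)) * hu'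
  rw [A_sq_apply, sum_congr rfl hterm, sum_const, nsmul_eq_mul, norm_mul, norm_mul,
    Complex.norm_natCast, hd, Complex.norm_conj, hd, mul_one, mul_one]

/-- `|(A²)ᵥₐ| = |N(v)|` forces all paths `v - u - a` to carry the same gain; its conjugate is the
value at `a` of the switching function `d`. -/
theorem switchesToOne_of_adj_iff {v : V} (hv : (Φ.G.neighborFinset v).Nonempty)
    (hadj : ∀ a b, Φ.G.Adj a b ↔
      (Φ.G.neighborFinset a = Φ.G.neighborFinset v ↔ Φ.G.neighborFinset b ≠ Φ.G.neighborFinset v))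
    (hnorm : ∀ a, Φ.G.neighborFinset a = Φ.G.neighborFinset v →
      ‖(Φ.A ^ 2) v a‖ = #(Φ.G.neighborFinset v)) :
    Φ.SwitchesToOne := by
  set c : ℂ := ((#(Φ.G.neighborFinset v) : ℕ) : ℂ)
  have hc : ‖c‖ = #(Φ.G.neighborFinset v) := Complex.norm_natCast _
  have hc0 : (#(Φ.G.neighborFinset v) : ℝ) ≠ 0 := by exact_mod_cast hv.card_pos.ne'
  have hpath : ∀ a, Φ.G.neighborFinset a = Φ.G.neighborFinset v →
      ∀ u ∈ Φ.G.neighborFinset v, Φ.A v u * Φ.A u a = (Φ.A ^ 2) v a / c := by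
    intro a ha u hu
    have hsum := Φ.A_sq_apply v a
    rw [ha, inter_self] at hsum
    have hunit : ∀ u ∈ Φ.G.neighborFinset v, ‖Φ.A v u * Φ.A u a‖ = 1 := fun u hu => by
      have hau : Φ.G.Adj a u := (mem_neighborFinset _ _ _).1 (by rwa [ha])
      rw [norm_mul, Φ.unitGain v u ((mem_neighborFinset _ _ _).1 hu), Φ.unitGain u a hau.symm,
        one_mul]
    rw [eq_inv_card_smul_sum_of_norm_sum_eq_card hunit (by rw [← hsum, hnorm a ha]) u hu, ← hsum,
      Complex.real_smul, Complex.ofReal_inv, Complex.ofReal_natCast, inv_mul_eq_div]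
  set d : V → ℂ := fun a =>
    if Φ.G.neighborFinset a = Φ.G.neighborFinset v then conj ((Φ.A ^ 2) v a) / c else Φ.A a v
  have hside : ∀ a, Φ.G.Adj a v ↔ Φ.G.neighborFinset a ≠ Φ.G.neighborFinset v := fun a => by
    rw [hadj, ne_self_iff_false, iff_false]
  have hd : ∀ a b, Φ.G.neighborFinset a = Φ.G.neighborFinset v → Φ.G.Adj a b →
      Φ.A a b = d a * conj (d b) := by
    intro a b ha hab
    have hb : Φ.G.neighborFinset b ≠ Φ.G.neighborFinset v := ((hadj a b).1 hab).1 ha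
    have hbv : b ∈ Φ.G.neighborFinset v := ha ▸ (mem_neighborFinset _ _ _).2 hab
    have h1 := congrArg conj (hpath a ha b hbv)
    rw [map_mul, map_div₀, Complex.conj_natCast, ← Φ.A_apply_swap v b, ← Φ.A_apply_swap b a] at h1
    have h2 := Φ.A_mul_A_swap ((mem_neighborFinset _ _ _).1 hbv)
    simp only [d, if_pos ha, if_neg hb, ← Φ.A_apply_swap b v]
    linear_combination Φ.A v b * h1 - Φ.A a b * h2
  refine Φ.switchesToOne_iff.2 ⟨d, fun a => ?_, fun a b hab => ?_⟩
  · by_cases ha : Φ.G.neighborFinset a = Φ.G.neighborFinset v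
    · simp only [d, if_pos ha]
      rw [norm_div, Complex.norm_conj, hnorm a ha, hc, div_self hc0]
    · simp only [d, if_neg ha]
      exact Φ.unitGain a v ((hside a).2 ha)
  · by_cases ha : Φ.G.neighborFinset a = Φ.G.neighborFinset v
    · exact hd a b ha hab
    · have hb : Φ.G.neighborFinset b = Φ.G.neighborFinset v :=
        not_not.1 (((hadj a b).1 hab).not.1 ha)
      rw [Φ.A_apply_swap b a, hd b a hb hab.symm, map_mul, Complex.conj_conj, mul_comm]

end TGainGraph

open TGainGraph in
/-- On a connected `r`-regular graph (`r ≥ 1`), every vertex energy is at least 1,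
with equality iff `Φ ∼ (K_{r,r}, 1)`. -/
theorem one_le_vertexEnergy_of_regular {V : Type*} [Fintype V] [DecidableEq V]
    (Φ : TGainGraph V) (hconn : Φ.G.Connected) (r : ℕ) (hr : 1 ≤ r)
    (hreg : ∀ v, Φ.deg v = r) :
    ∀ v, 1 ≤ Φ.vertexEnergy v ∧
      (Φ.vertexEnergy v = 1 ↔ Φ.SwitchEquivToCompleteBipartite r r) := by
  intro v
  have hreg : Φ.G.IsRegularOfDegree r := hreg
  refine ⟨Φ.one_le_vertexEnergy hreg hr v, ?_⟩
  rw [Φ.vertexEnergy_eq_one_iff hreg hr v, Φ.sum_norm_A_sq_apply_sq_eq_iff hreg v]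
  constructor
  · intro htight
    have hadj := hconn.adj_iff_of_neighborFinset_eq fun w hw =>
      neighborFinset_eq_of_card_inter_eq hreg ((htight w).2.resolve_left hw.card_pos.ne')
    obtain ⟨b, hb⟩ : (Φ.G.neighborFinset v).Nonempty := by
      rw [← card_pos, card_neighborFinset_eq_degree, hreg v]
      exact hr
    have hbv := ((hadj v b).1 ((mem_neighborFinset _ _ _).1 hb)).1 rfl
    refine ⟨exists_equiv_completeBipartite_of_adj_iff hreg
      (p := fun a => Φ.G.neighborFinset a = Φ.G.neighborFinset v) rfl hbv hadj,
      Φ.switchesToOne_of_adj_iff ⟨b, hb⟩ hadj fun a ha => ?_⟩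
    rw [(htight a).1, ha, inter_self]
  · rintro ⟨⟨e, he⟩, hswitch⟩ w
    refine ⟨Φ.norm_A_sq_apply_of_switchesToOne hswitch v w, ?_⟩
    rcases neighborFinset_eq_or_disjoint_of_equiv_completeBipartite he v w with h | h
    · rw [h, inter_self, card_neighborFinset_eq_degree, hreg v]
      exact Or.inr rfl
    · rw [disjoint_iff_inter_eq_empty.1 h, card_empty]
      exact Or.inl rfl
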